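/- arXiv:2505.08539 — 2 statements merged into one kernel-verified Lean document; each statement's English description precedes it below -/
import Mathlib

section
/- Let Γ be a connected signed graph with girth g (i.e., Γ contains a cycle and the shortest cycle has length g). Then i₊(Γ) ≥ ⌈g/2⌉ − 1. -/
open Matrix

/-- A signed graph: a simple graph together with a `±1` sign on each edge. -/
structure SignedGraph (V : Type*) where
  G : SimpleGraph V
  sign : V → V → ℝ
  sign_symm : ∀ u v, sign u v = sign v u
  sign_pm : ∀ u v, G.Adj u v → sign u v = 1 ∨ sign u v = -1

namespace SignedGraph

variable {V : Type*} [Fintype V] [DecidableEq V]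

open scoped Classical

/-- The (signed) adjacency matrix of a signed graph. -/
noncomputable def adjMatrix (Γ : SignedGraph V) : Matrix V V ℝ :=
  fun u v => if Γ.G.Adj u v then Γ.sign u v else 0

lemma isHermitian (Γ : SignedGraph V) : Γ.adjMatrix.IsHermitian := by
  classical
  ext u v
  simp only [adjMatrix, Matrix.conjTranspose_apply, star_trivial]
  by_cases h : Γ.G.Adj v u
  · simp [h, h.symm, Γ.sign_symm v u]
  · have h' : ¬ Γ.G.Adj u v := fun hh => h hh.symm
    simp [h, h']

/-- number of positive eigenvalues (with multiplicity). -/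
noncomputable def posInertia (Γ : SignedGraph V) : ℕ :=
  (Finset.univ.filter fun i => 0 < Γ.isHermitian.eigenvalues i).card

/-- number of negative eigenvalues (with multiplicity). -/
noncomputable def negInertia (Γ : SignedGraph V) : ℕ :=
  (Finset.univ.filter fun i => Γ.isHermitian.eigenvalues i < 0).card

/-- multiplicity of the eigenvalue zero. -/
noncomputable def nullity (Γ : SignedGraph V) : ℕ :=
  (Finset.univ.filter fun i => Γ.isHermitian.eigenvalues i = 0).card

/-- The sign of an (unordered) edge. -/
def edgeSign (Γ : SignedGraph V) : Sym2 V → ℝ :=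
  Sym2.lift ⟨Γ.sign, Γ.sign_symm⟩

/-- A signed graph is balanced if every cycle has positive sign. -/
def Balanced (Γ : SignedGraph V) : Prop :=
  ∀ (v : V) (w : Γ.G.Walk v v), w.IsCycle → (w.edges.map Γ.edgeSign).prod = 1

/-- Switching equivalence of two signed graphs on the same vertex set. -/
def SwitchingEquiv (Γ₁ Γ₂ : SignedGraph V) : Prop :=
  Γ₁.G = Γ₂.G ∧ ∃ θ : V → ℝ, (∀ v, θ v = 1 ∨ θ v = -1) ∧
    ∀ u v, Γ₁.G.Adj u v → Γ₂.sign u v = θ u * Γ₁.sign u v * θ v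

/-- The induced signed subgraph on a finite set of vertices. -/
noncomputable def inducedOn (Γ : SignedGraph V) (s : Finset V) :
    SignedGraph {x // x ∈ s} where
  G := { Adj := fun a b => Γ.G.Adj a b
         symm := ⟨fun a b h => Γ.G.adj_symm h⟩
         loopless := ⟨fun a h => Γ.G.irrefl h⟩ }
  sign := fun a b => Γ.sign a b
  sign_symm := fun a b => Γ.sign_symm a b
  sign_pm := fun a b h => Γ.sign_pm a b h

end SignedGraph

/-
Let `v₀ v₁ … v_{g-1}` be a shortest cycle. A chord `vᵢvⱼ` with `i < j ≤ g - 2`, `j ≠ i + 1`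
would close a cycle of length `j - i + 1 < g`, so `v₀, …, v_{g-2}` span an induced path.
Put `m = ⌊(g-1)/2⌋`. Switching by `θₖ = σ(v₀v₁)⋯σ(vₖ₋₁vₖ)` makes the path on `v₀, …, v_{2m-1}`
all-positive, and on the vectors `xᵥ = θₖ c_{⌊k/2⌋}` (for `v = vₖ`, zero elsewhere) the quadratic
form of `A(Γ)` becomes `2 (Σ cᵢ² + Σ cᵢ cᵢ₊₁) = c₀² + c_{m-1}² + Σ (cᵢ + cᵢ₊₁)²`, which is
positive definite in `c`. An `m`-dimensional space on which the form is positive meets the span of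
the eigenvectors with nonpositive eigenvalues trivially, hence `i₊(Γ) ≥ m`.
-/

open Finset Module

namespace Matrix.IsHermitian

variable {n : Type*} [Fintype n] [DecidableEq n] {A : Matrix n n ℝ}

lemma dotProduct_mulVec_eq_sum_eigenvalues (hA : A.IsHermitian) (x : n → ℝ) :
    x ⬝ᵥ A *ᵥ x =
      ∑ i, hA.eigenvalues i * (star (hA.eigenvectorUnitary : Matrix n n ℝ) *ᵥ x) i ^ 2 := by
  have hvecMul : x ᵥ* (hA.eigenvectorUnitary : Matrix n n ℝ) =
      star (hA.eigenvectorUnitary : Matrix n n ℝ) *ᵥ x := by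
    ext i
    simp [vecMul, mulVec, dotProduct, mul_comm]
  conv_lhs => rw [hA.spectral_theorem, Unitary.conjStarAlgAut_apply]
  rw [← mulVec_mulVec, ← mulVec_mulVec, dotProduct_mulVec, hvecMul]
  simp [dotProduct, mulVec_diagonal, sq, mul_left_comm]

lemma finrank_le_card_eigenvalues_pos (hA : A.IsHermitian) {E : Type*} [AddCommGroup E]
    [Module ℝ E] (φ : E →ₗ[ℝ] n → ℝ) (hφ : ∀ c ≠ 0, 0 < φ c ⬝ᵥ A *ᵥ φ c) :
    finrank ℝ E ≤ #{i | 0 < hA.eigenvalues i} := by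
  set P : Finset n := {i | 0 < hA.eigenvalues i}
  let U : Matrix n n ℝ := hA.eigenvectorUnitary
  let L : (n → ℝ) →ₗ[ℝ] P → ℝ :=
    LinearMap.funLeft ℝ ℝ (Subtype.val : P → n) ∘ₗ (star U).mulVecLin
  have hinj : Function.Injective (L ∘ₗ φ) := by
    refine (injective_iff_map_eq_zero _).mpr fun c hc ↦ ?_
    by_contra hc0
    refine (hφ c hc0).not_ge ?_
    rw [dotProduct_mulVec_eq_sum_eigenvalues hA]
    refine sum_nonpos fun i _ ↦ ?_
    by_cases hi : i ∈ P
    · have : (star U *ᵥ φ c) i = 0 := congr_fun hc ⟨i, hi⟩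
      simp [U, this]
    · exact mul_nonpos_of_nonpos_of_nonneg (by simpa [P] using hi) (sq_nonneg _)
  simpa using LinearMap.finrank_le_finrank_of_injective hinj

end Matrix.IsHermitian

lemma Matrix.sum_single_dotProduct_mulVec_sum_single {R n ι : Type*} [CommSemiring R]
    [Fintype n] [DecidableEq n] (A : Matrix n n R) (s : Finset ι) (p : ι → n) (y : ι → R) :
    (∑ k ∈ s, Pi.single (p k) (y k)) ⬝ᵥ A *ᵥ ∑ k ∈ s, Pi.single (p k) (y k) =
      ∑ k ∈ s, ∑ l ∈ s, y k * A (p k) (p l) * y l := by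
  simp only [sum_dotProduct, mulVec_sum, dotProduct_sum, mulVec_single, single_dotProduct]
  rw [sum_comm]
  simp [mul_assoc]

lemma sum_range_sum_range_tridiag {R : Type*} [CommSemiring R] (N : ℕ) (s y : ℕ → R) :
    ∑ k ∈ range (N + 1), ∑ l ∈ range (N + 1),
        y k * ((if l = k + 1 then s k else 0) + (if k = l + 1 then s l else 0)) * y l =
      2 * ∑ k ∈ range N, s k * y k * y (k + 1) := by
  have hrange (f : ℕ → R) :
      ∑ k ∈ range (N + 1), (if k < N then f k else 0) = ∑ k ∈ range N, f k := by
    rw [sum_range_succ, if_neg (lt_irrefl N), add_zero]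
    exact sum_congr rfl fun k hk ↦ if_pos (mem_range.mp hk)
  simp only [mul_add, add_mul, sum_add_distrib, mul_ite, ite_mul, mul_zero, zero_mul]
  rw [sum_comm (f := fun k l ↦ if k = l + 1 then _ else _)]
  simp only [sum_ite_eq', mem_range, add_lt_add_iff_right, hrange, two_mul]
  congr 1 <;> exact sum_congr rfl fun k _ ↦ by ring

lemma two_mul_sum_range_div_two {R : Type*} [CommRing R] (d : ℕ → R) (n : ℕ) :
    2 * ∑ k ∈ range (2 * n + 1), d (k / 2) * d ((k + 1) / 2) =
      d 0 ^ 2 + d n ^ 2 + ∑ i ∈ range n, (d i + d (i + 1)) ^ 2 := by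
  induction n with
  | zero => simp; ring
  | succ n ih =>
    rw [show 2 * (n + 1) + 1 = 2 * n + 1 + 1 + 1 by ring, sum_range_succ, sum_range_succ,
      mul_add, mul_add, ih, sum_range_succ, show (2 * n + 1) / 2 = n by omega,
      show (2 * n + 1 + 1) / 2 = n + 1 by omega, show (2 * n + 1 + 1 + 1) / 2 = n + 1 by omega]
    ring

lemma sum_range_div_two_pos (d : ℕ → ℝ) (n : ℕ) (hd : ∃ i ≤ n, d i ≠ 0) :
    0 < ∑ k ∈ range (2 * n + 1), d (k / 2) * d ((k + 1) / 2) := by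
  have hsum := two_mul_sum_range_div_two d n
  have hnonneg : 0 ≤ ∑ i ∈ range n, (d i + d (i + 1)) ^ 2 := sum_nonneg fun i _ ↦ sq_nonneg _
  by_contra! hle
  have h0 : d 0 = 0 := by nlinarith [sq_nonneg (d 0), sq_nonneg (d n)]
  have hsq : ∑ i ∈ range n, (d i + d (i + 1)) ^ 2 = 0 := by
    nlinarith [sq_nonneg (d 0), sq_nonneg (d n)]
  rw [sum_eq_zero_iff_of_nonneg fun i _ ↦ sq_nonneg _] at hsq
  obtain ⟨i, hi, hdi⟩ := hd
  suffices ∀ i ≤ n, d i = 0 from hdi (this i hi)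
  intro i hi
  induction i with
  | zero => exact h0
  | succ i ih =>
    have hpair := pow_eq_zero_iff two_ne_zero |>.mp (hsq i (mem_range.mpr (by omega)))
    linear_combination hpair - ih (by omega)

namespace SimpleGraph.Walk

variable {V : Type*} {G : SimpleGraph V}

lemma IsPath.egirth_le_length_add_one {u v : V} {p : G.Walk u v} (hp : p.IsPath)
    (hadj : G.Adj v u) (hlen : p.length ≠ 1) : G.egirth ≤ (p.length + 1 : ℕ) :=
  egirth_le_length <| (cons_isCycle_iff p hadj).mpr
    ⟨hp, fun he ↦ hlen (hp.length_eq_one_of_mem_edges (Sym2.eq_swap ▸ he))⟩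

lemma IsCycle.adj_getVert_iff_of_egirth_eq {u : V} {w : G.Walk u u} (hw : w.IsCycle)
    (hg : G.egirth = w.length) {i j : ℕ} (hi : i ≤ w.length - 2) (hj : j ≤ w.length - 2) :
    G.Adj (w.getVert i) (w.getVert j) ↔ j = i + 1 ∨ i = j + 1 := by
  have h3 := hw.three_le_length
  have no_chord : ∀ i j, i < j → j ≤ w.length - 2 →
      G.Adj (w.getVert i) (w.getVert j) → j = i + 1 := by
    intro i j hij hj hadj
    by_contra hne
    have hpath := (hw.isPath_take (n := j) (by omega)).drop i
    rw [← min_eq_right hij.le, ← take_getVert] at hadj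
    have hlen := hpath.egirth_le_length_add_one hadj.symm
      (by rw [drop_length, take_length]; omega)
    rw [hg, drop_length, take_length, ENat.natCast_le_natCast] at hlen
    omega
  constructor
  · intro hadj
    rcases lt_trichotomy i j with h | rfl | h
    · exact .inl (no_chord i j h hj hadj)
    · exact absurd hadj (G.loopless.irrefl _)
    · exact .inr (no_chord j i h hi hadj.symm)
  · rintro (rfl | rfl)
    · exact w.adj_getVert_succ (by omega)
    · exact (w.adj_getVert_succ (by omega)).symm

end SimpleGraph.Walk

namespace SignedGraph

lemma adjMatrix_apply_of_induced_path {V : Type*} (Γ : SignedGraph V) (p : ℕ → V) {N : ℕ}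
    (hp : ∀ k < N, ∀ l < N, Γ.G.Adj (p k) (p l) ↔ l = k + 1 ∨ k = l + 1)
    {k l : ℕ} (hk : k < N) (hl : l < N) :
    Γ.adjMatrix (p k) (p l) = (if l = k + 1 then Γ.sign (p k) (p (k + 1)) else 0) +
      (if k = l + 1 then Γ.sign (p l) (p (l + 1)) else 0) := by
  have hadj := hp k hk l hl
  by_cases hl' : l = k + 1
  · subst hl'
    simp [adjMatrix, hadj, show k ≠ k + 1 + 1 by omega]
  by_cases hk' : k = l + 1
  · subst hk'
    simp [adjMatrix, hadj, Γ.sign_symm, show l ≠ l + 1 + 1 by omega]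
  simp [adjMatrix, hadj, hk', hl']

variable {V : Type*} [Fintype V] [DecidableEq V]

theorem le_posInertia_of_induced_path (Γ : SignedGraph V) (p : ℕ → V) (m : ℕ)
    (hp : ∀ k < 2 * m, ∀ l < 2 * m, Γ.G.Adj (p k) (p l) ↔ l = k + 1 ∨ k = l + 1) :
    m ≤ Γ.posInertia := by
  obtain _ | n := m
  · exact Nat.zero_le _
  set s : ℕ → ℝ := fun k ↦ Γ.sign (p k) (p (k + 1))
  set θ : ℕ → ℝ := fun k ↦ ∏ j ∈ range k, s j
  have hs : ∀ k < 2 * n + 1, s k ^ 2 = 1 := fun k hk ↦ by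
    rcases Γ.sign_pm _ _ ((hp k (by omega) (k + 1) (by omega)).mpr (.inl rfl)) with h | h <;>
      simp [s, h]
  have hθ : ∀ k ≤ 2 * n + 1, θ k ^ 2 = 1 := fun k hk ↦ by
    rw [← prod_pow]
    exact prod_eq_one fun j hj ↦ hs j (by simp at hj; omega)
  let pad : (Fin (n + 1) → ℝ) →ₗ[ℝ] ℕ → ℝ :=
    LinearMap.pi fun i ↦ if h : i < n + 1 then LinearMap.proj ⟨i, h⟩ else 0
  let φ : (Fin (n + 1) → ℝ) →ₗ[ℝ] V → ℝ :=
    ∑ k ∈ range (2 * n + 1 + 1),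
      LinearMap.single ℝ (fun _ ↦ ℝ) (p k) ∘ₗ (θ k • LinearMap.proj (k / 2) ∘ₗ pad)
  have hφ (c) : φ c = ∑ k ∈ range (2 * n + 1 + 1), Pi.single (p k) (θ k * pad c (k / 2)) := by
    simp [φ]
  have hswitch : ∀ c, ∀ k ∈ range (2 * n + 1),
      s k * (θ k * pad c (k / 2)) * (θ (k + 1) * pad c ((k + 1) / 2)) =
        pad c (k / 2) * pad c ((k + 1) / 2) := by
    intro c k hk
    have hk := mem_range.mp hk
    simp only [θ, prod_range_succ]
    linear_combination (pad c (k / 2) * pad c ((k + 1) / 2)) * (θ k ^ 2 * hs k hk + hθ k hk.le)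
  have hpos : ∀ c ≠ 0, 0 < φ c ⬝ᵥ Γ.adjMatrix *ᵥ φ c := by
    intro c hc
    obtain ⟨i, hi⟩ := Function.ne_iff.mp hc
    have := sum_range_div_two_pos (pad c) n
      ⟨i, i.is_le, by simpa [pad, i.is_le] using hi⟩
    rw [hφ, sum_single_dotProduct_mulVec_sum_single, sum_congr rfl fun k hk ↦ sum_congr rfl
      fun l hl ↦ by rw [Γ.adjMatrix_apply_of_induced_path p hp (mem_range.mp hk) (mem_range.mp hl)],
      sum_range_sum_range_tridiag, sum_congr rfl (hswitch c)]
    positivity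
  simpa [posInertia] using Γ.isHermitian.finrank_le_card_eigenvalues_pos φ hpos

end SignedGraph

theorem posInertia_ge_of_girth_general {V : Type*} [Fintype V] [DecidableEq V] (Γ : SignedGraph V)
    (g : ℕ) (hg : Γ.G.egirth = g) :
    (g + 1) / 2 - 1 ≤ Γ.posInertia := by
  have hcyclic : ¬ Γ.G.IsAcyclic := by
    rw [← SimpleGraph.egirth_eq_top, hg]
    exact ENat.natCast_ne_top g
  obtain ⟨_, w, hw, hwg⟩ := SimpleGraph.exists_egirth_eq_length.mpr hcyclic
  have hlen : w.length = g := by exact_mod_cast hwg.symm.trans hg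
  have := Γ.le_posInertia_of_induced_path w.getVert ((g - 1) / 2) fun k hk l hl ↦
    hw.adj_getVert_iff_of_egirth_eq hwg (by omega) (by omega)
  omega

/-- for a connected signed graph of girth `g`, `i₊(Γ) ≥ ⌈g/2⌉ - 1`. -/
theorem posInertia_ge_of_girth {V : Type*} [Fintype V] [DecidableEq V] (Γ : SignedGraph V)
    (hconn : Γ.G.Connected) (g : ℕ) (hg : Γ.G.egirth = g) :
    (g + 1) / 2 - 1 ≤ Γ.posInertia :=
  posInertia_ge_of_girth_general Γ g hg
end

section
/- Let Γ be a connected signed graph with girth g whose negative inertia index satisfies i₋(Γ) = ⌈g/2⌉ − 1, and suppose Γ is not a cycle. Then g ∈ {3, 4} and i₋(Γ) = 1. -/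
open Matrix

/-!
A shortest cycle `C` of `Γ`, of length `g`, is chordless. If a vertex `x` off `C` has two
neighbours on `C`, the two arcs of `C` between them, closed up through `x`, are cycles of lengths
`d + 2` and `g - d + 2`, so `g ≤ 4`. If `x` has exactly one neighbour `c₀` on `C`, the pairs
`(x, c₀), (c₁, c₂), (c₃, c₄), …, (c_{2k-3}, c_{2k-2})` with `k = ⌈g/2⌉` are edges whose first
vertices are pairwise nonadjacent, and the first vertex of a pair is adjacent to the second vertex
of no later pair. In the adjacency matrix `A` this is a zero principal block `A[a,a]` next to a
triangular block `A[a,b]` with nonzero diagonal, which gives a `k`-dimensional subspace on which the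
quadratic form of `A` is negative definite; hence `i₋(Γ) ≥ ⌈g/2⌉`, which the hypothesis excludes.
If no vertex off `C` has a neighbour on `C`, connectivity puts every vertex on `C`, and `Γ` is a
cycle.
-/

open Finset

namespace Matrix

theorem transpose_one_submatrix_mul_mul_one_submatrix {R l m n : Type*} [NonAssocSemiring R]
    [Fintype n] [DecidableEq n] (A : Matrix n n R) (a : l → n) (b : m → n) :
    ((1 : Matrix n n R).submatrix id a)ᵀ * A * (1 : Matrix n n R).submatrix id b =
      A.submatrix a b := by
  ext i j
  simp [mul_apply, one_apply]

/-- With `C = A[a,b]` and `D = A[b,b]`, the witness is `B = S_b + S_a X` for the selection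
matrices `S_a`, `S_b` and `Cᵀ X = -(1 + D) / 2`, so that `Bᵀ A B = D + Cᵀ X + (Cᵀ X)ᵀ = -1`. -/
theorem IsSymm.exists_transpose_mul_mul_eq_neg_one {K m n : Type*} [CommRing K]
    [Invertible (2 : K)] [Fintype m] [DecidableEq m] [Fintype n] [DecidableEq n]
    {A : Matrix n n K} (hA : A.IsSymm) (a b : m → n) (haa : A.submatrix a a = 0)
    (hab : IsUnit (A.submatrix a b).det) :
    ∃ B : Matrix n m K, Bᵀ * A * B = -1 := by
  set C := A.submatrix a b
  set D := A.submatrix b b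
  set S : (m → n) → Matrix n m K := fun e => (1 : Matrix n n K).submatrix id e
  have hS (e f : m → n) : (S e)ᵀ * A * S f = A.submatrix e f :=
    transpose_one_submatrix_mul_mul_one_submatrix A e f
  have hba : A.submatrix b a = Cᵀ := by rw [transpose_submatrix, hA.eq]
  have hD : Dᵀ = D := by rw [transpose_submatrix, hA.eq]
  set X := -(⅟2 : K) • (Cᵀ⁻¹ * (1 + D))
  have hCX : Cᵀ * X = -(⅟2 : K) • (1 + D) := by
    rw [Matrix.mul_smul, ← Matrix.mul_assoc, mul_nonsing_inv _ (by rwa [det_transpose]),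
      Matrix.one_mul]
  refine ⟨S b + S a * X, ?_⟩
  calc (S b + S a * X)ᵀ * A * (S b + S a * X)
      = (S b)ᵀ * A * S b + ((S b)ᵀ * A * S a) * X + Xᵀ * ((S a)ᵀ * A * S b)
          + Xᵀ * ((S a)ᵀ * A * S a) * X := by
        simp only [transpose_add, transpose_mul, Matrix.add_mul, Matrix.mul_add, Matrix.mul_assoc]
        abel
    _ = D + Cᵀ * X + (Cᵀ * X)ᵀ := by
        rw [hS, hS, hS, hS, haa, hba, transpose_mul, transpose_transpose, Matrix.mul_zero,
          Matrix.zero_mul, add_zero]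
    _ = -1 := by
        rw [hCX, transpose_smul, transpose_add, transpose_one, hD, add_assoc, ← add_smul,
          ← neg_add, invOf_two_add_invOf_two, neg_one_smul]
        abel

namespace IsHermitian

variable {n : Type*} [Fintype n] [DecidableEq n] {A : Matrix n n ℝ}

theorem dotProduct_mulVec_self_eq_sum_eigenvalues (hA : A.IsHermitian) (y : n → ℝ) :
    y ⬝ᵥ A *ᵥ y = ∑ j, hA.eigenvalues j * ((hA.eigenvectorBasis j : n → ℝ) ⬝ᵥ y) ^ 2 := by
  have hinner (u v : EuclideanSpace ℝ n) : inner ℝ u v = (u : n → ℝ) ⬝ᵥ (v : n → ℝ) := by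
    simp [PiLp.inner_apply, dotProduct, mul_comm]
  have hparseval := hA.eigenvectorBasis.sum_inner_mul_inner (WithLp.toLp 2 y)
    (WithLp.toLp 2 (A *ᵥ y))
  simp only [hinner] at hparseval
  rw [← hparseval]
  refine Finset.sum_congr rfl fun j _ => ?_
  have hAe : (hA.eigenvectorBasis j : n → ℝ) ⬝ᵥ A *ᵥ y =
      hA.eigenvalues j * ((hA.eigenvectorBasis j : n → ℝ) ⬝ᵥ y) := by
    rw [dotProduct_mulVec, ← mulVec_transpose, ← conjTranspose_eq_transpose_of_trivial, hA.eq,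
      hA.mulVec_eigenvectorBasis, smul_dotProduct, smul_eq_mul]
  rw [hAe, dotProduct_comm y]
  ring

/-- A vector of the range of `B` orthogonal to every eigenvector with negative eigenvalue has
nonnegative form; a dimension count finds a nonzero one when `B` has too many columns. -/
theorem card_le_card_eigenvalues_neg_of_dotProduct_mulVec_neg (hA : A.IsHermitian)
    {ι : Type*} [Fintype ι] (B : Matrix n ι ℝ)
    (hB : ∀ c ≠ 0, (B *ᵥ c) ⬝ᵥ A *ᵥ (B *ᵥ c) < 0) :
    Fintype.card ι ≤ #{j | hA.eigenvalues j < 0} := by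
  by_contra! hlt
  let P : Matrix {j // hA.eigenvalues j < 0} n ℝ := fun j => hA.eigenvectorBasis j
  obtain ⟨c, hc, hc0⟩ := Submodule.exists_mem_ne_zero_of_ne_bot
    (LinearMap.ker_ne_bot_of_finrank_lt (f := (P * B).mulVecLin)
      (by simpa [Fintype.card_subtype] using hlt))
  have hproj (j) (hj : hA.eigenvalues j < 0) :
      (hA.eigenvectorBasis j : n → ℝ) ⬝ᵥ B *ᵥ c = 0 := by
    have hPB := congrFun (LinearMap.mem_ker.mp hc) ⟨j, hj⟩
    rw [mulVecLin_apply, ← mulVec_mulVec] at hPB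
    exact hPB
  refine (hB c hc0).not_ge ?_
  rw [hA.dotProduct_mulVec_self_eq_sum_eigenvalues]
  refine Finset.sum_nonneg fun j _ => ?_
  rcases lt_or_ge (hA.eigenvalues j) 0 with hj | hj
  · simp [hproj j hj]
  · positivity

theorem card_le_card_eigenvalues_neg_of_submatrix {m : Type*} [Fintype m] [DecidableEq m]
    (hA : A.IsHermitian) (a b : m → n) (haa : A.submatrix a a = 0)
    (hab : IsUnit (A.submatrix a b).det) : Fintype.card m ≤ #{j | hA.eigenvalues j < 0} := by
  obtain ⟨B, hB⟩ := IsSymm.exists_transpose_mul_mul_eq_neg_one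
    ((conjTranspose_eq_transpose_of_trivial A).symm.trans hA) a b haa hab
  refine hA.card_le_card_eigenvalues_neg_of_dotProduct_mulVec_neg B fun c hc => ?_
  have hquad : (B *ᵥ c) ⬝ᵥ A *ᵥ (B *ᵥ c) = c ⬝ᵥ (Bᵀ * A * B) *ᵥ c := by
    rw [← mulVec_mulVec, ← mulVec_mulVec, dotProduct_mulVec c Bᵀ, vecMul_transpose]
  rw [hquad, hB]
  simpa [neg_mulVec] using dotProduct_star_self_pos_iff.mpr hc

end IsHermitian

end Matrix

namespace SimpleGraph

theorem Preconnected.mem_of_forall_adj_mem {V : Type*} {G : SimpleGraph V} (hG : G.Preconnected)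
    {S : Set V} {u : V} (hu : u ∈ S) (hS : ∀ v ∈ S, ∀ w, G.Adj v w → w ∈ S) (v : V) : v ∈ S := by
  by_contra hv
  obtain ⟨d, -, hd, hd'⟩ := (hG u v).some.exists_boundary_dart S hu hv
  exact hd' (hS _ hd _ d.adj)

namespace Walk

variable {V : Type*} {G : SimpleGraph V}

theorem IsPath.isCycle_cons_concat {a b x : V} {p : G.Walk a b} (hp : p.IsPath) (hab : a ≠ b)
    (hx : x ∉ p.support) (hxa : G.Adj x a) (hbx : G.Adj b x) :
    (cons hxa (p.concat hbx)).IsCycle := by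
  refine (cons_isCycle_iff _ hxa).mpr ⟨hp.concat hx hbx, ?_⟩
  rw [edges_concat, List.concat_eq_append, List.mem_append, List.mem_singleton, Sym2.eq_iff]
  rintro (he | ⟨rfl, -⟩ | ⟨-, rfl⟩)
  · exact hx (p.fst_mem_support_of_mem_edges he)
  · exact hx p.end_mem_support
  · exact hab rfl

variable {u : V} {c : G.Walk u u}

theorem IsCycle.exists_isPath_getVert_getVert (hc : c.IsCycle) {m n : ℕ} (hmn : m ≤ n)
    (hn : n < c.length) :
    ∃ p : G.Walk (c.getVert m) (c.getVert n),
      p.IsPath ∧ p.length = n - m ∧ p.support ⊆ c.support := by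
  refine ⟨((c.take n).drop m).copy (by rw [take_getVert, min_eq_right hmn]) rfl, ?_, ?_, ?_⟩
  · simpa using (hc.isPath_take hn).drop m
  · simp [drop_length, take_length, hn.le]
  · rw [support_copy]
    exact ((isSubwalk_drop _ _).trans (isSubwalk_take _ _)).support_subset

theorem IsCycle.chordless_of_egirth_eq (hc : c.IsCycle) (hmin : G.egirth = c.length) {m n : ℕ}
    (hm : m < c.length) (hn : n < c.length) (hadj : G.Adj (c.getVert m) (c.getVert n)) :
    m + 1 = n ∨ n + 1 = m ∨ (m = 0 ∧ n + 1 = c.length) ∨ (n = 0 ∧ m + 1 = c.length) := by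
  wlog hmn : m < n generalizing m n
  · obtain hnm | rfl := (not_lt.mp hmn).lt_or_eq
    · have := this hn hm hadj.symm hnm
      omega
    · exact absurd hadj G.irrefl
  obtain ⟨p, hp, hlen, -⟩ := hc.exists_isPath_getVert_getVert hmn.le hn
  by_cases h1 : n - m = 1
  · omega
  have hcyc : (cons hadj.symm p).IsCycle := (cons_isCycle_iff p hadj.symm).mpr
    ⟨hp, fun he => h1 (hlen ▸ hp.length_eq_one_of_mem_edges (Sym2.eq_swap ▸ he))⟩
  have hle := hmin ▸ G.egirth_le_length hcyc
  rw [length_cons, hlen, Nat.cast_le] at hle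
  omega

theorem IsCycle.length_le_four_of_adj_getVert (hc : c.IsCycle) (hmin : G.egirth = c.length)
    {x : V} (hx : x ∉ c.support) (hxu : G.Adj x u) {n : ℕ} (hn0 : 0 < n) (hn : n < c.length)
    (hxn : G.Adj x (c.getVert n)) : c.length ≤ 4 := by
  have hne : c.getVert n ≠ u := fun h => by
    have := (hc.getVert_endpoint_iff hn.le).mp h
    omega
  have hle₁ := hmin ▸ G.egirth_le_length <| (hc.isPath_take hn).isCycle_cons_concat hne.symm
    (fun h => hx ((isSubwalk_take c n).support_subset h)) hxu hxn.symm
  have hle₂ := hmin ▸ G.egirth_le_length <| (hc.isPath_drop hn0).isCycle_cons_concat hne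
    (fun h => hx ((isSubwalk_drop c n).support_subset h)) hxn hxu.symm
  simp only [length_cons, length_concat, take_length, drop_length, Nat.cast_le] at hle₁ hle₂
  omega

theorem IsCycle.ncard_neighborSet_eq_two (hc : c.IsCycle) (hmin : G.egirth = c.length)
    (hall : ∀ v, v ∈ c.support) : (G.neighborSet u).ncard = 2 := by
  have hnil := hc.not_nil
  have h3 := hc.three_le_length
  have hnbr : G.neighborSet u = {c.snd, c.penultimate} := by
    ext w
    simp only [mem_neighborSet, Set.mem_insert_iff, Set.mem_singleton_iff]
    refine ⟨fun huw => ?_, ?_⟩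
    · obtain ⟨n, rfl, hn⟩ := mem_support_iff_exists_getVert.mp (hall w)
      have hn0 : n ≠ 0 := by rintro rfl; simp at huw
      have hnl : n ≠ c.length := by rintro rfl; simp at huw
      rcases hc.chordless_of_egirth_eq hmin (m := 0) (n := n) (by omega) (by omega)
        (by rwa [c.getVert_zero]) with h | h | h | h
      · left; rw [← h]
      · omega
      · right; rw [penultimate]; congr; omega
      · omega
    · rintro (rfl | rfl)
      · exact c.adj_snd hnil
      · exact (c.adj_penultimate hnil).symm
  rw [hnbr, Set.ncard_pair]
  intro h
  have := hc.getVert_injOn' (by simp; omega) (by simp) h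
  omega

end Walk

end SimpleGraph

namespace SignedGraph

variable {V : Type*} (Γ : SignedGraph V)

theorem adjMatrix_apply_of_not_adj {u v : V} (h : ¬Γ.G.Adj u v) : Γ.adjMatrix u v = 0 :=
  if_neg h

theorem adjMatrix_apply_ne_zero_of_adj {u v : V} (h : Γ.G.Adj u v) : Γ.adjMatrix u v ≠ 0 := by
  rw [adjMatrix, if_pos h]
  rcases Γ.sign_pm u v h with h | h <;> norm_num [h]

variable [Fintype V] [DecidableEq V]

theorem le_negInertia_of_triangular {k : ℕ} (a b : Fin k → V)
    (haa : ∀ i j, ¬Γ.G.Adj (a i) (a j)) (hab : ∀ i j, i < j → ¬Γ.G.Adj (a i) (b j))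
    (hadj : ∀ i, Γ.G.Adj (a i) (b i)) : k ≤ Γ.negInertia := by
  have hdet : (Γ.adjMatrix.submatrix a b).det = ∏ i, Γ.adjMatrix (a i) (b i) :=
    det_of_isLowerTriangular _ fun i j hij => Γ.adjMatrix_apply_of_not_adj (hab i j hij)
  have hunit : IsUnit (Γ.adjMatrix.submatrix a b).det := hdet ▸
    (Finset.prod_ne_zero_iff.mpr fun i _ => Γ.adjMatrix_apply_ne_zero_of_adj (hadj i)).isUnit
  simpa [negInertia] using Γ.isHermitian.card_le_card_eigenvalues_neg_of_submatrix a b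
    (ext fun i j => Γ.adjMatrix_apply_of_not_adj (haa i j)) hunit

theorem le_negInertia_of_isCycle_of_pendant {u x : V} {c : Γ.G.Walk u u} (hc : c.IsCycle)
    (hmin : Γ.G.egirth = c.length) (hxu : Γ.G.Adj x u)
    (hxc : ∀ n, 0 < n → n < c.length → ¬Γ.G.Adj x (c.getVert n)) :
    (c.length + 1) / 2 ≤ Γ.negInertia := by
  set k := (c.length + 1) / 2
  have hk (i : Fin k) : 2 * (i : ℕ) < c.length := by omega
  let a : Fin k → V := fun i => if (i : ℕ) = 0 then x else c.getVert (2 * i - 1)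
  refine Γ.le_negInertia_of_triangular a (fun i => c.getVert (2 * i)) ?_ ?_ ?_
  · intro i j hij
    have := hk i
    have := hk j
    by_cases hi : (i : ℕ) = 0 <;> by_cases hj : (j : ℕ) = 0 <;>
      simp only [a, hi, hj, if_true, if_false] at hij
    · exact Γ.G.irrefl hij
    · exact hxc _ (by omega) (by omega) hij
    · exact hxc _ (by omega) (by omega) hij.symm
    · have := hc.chordless_of_egirth_eq hmin (by omega) (by omega) hij
      omega
  · intro i j hij hadj
    have := hk j
    by_cases hi : (i : ℕ) = 0 <;> simp only [a, hi, if_true, if_false] at hadj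
    · exact hxc _ (by omega) (by omega) hadj
    · have := hc.chordless_of_egirth_eq hmin (by omega) (by omega) hadj
      omega
  · intro i
    by_cases hi : (i : ℕ) = 0
    · simpa [a, hi] using hxu
    · have := c.adj_getVert_succ (i := 2 * i - 1) (by have := hk i; omega)
      simpa [a, hi, show 2 * (i : ℕ) - 1 + 1 = 2 * i by omega] using this

end SignedGraph

open SimpleGraph SimpleGraph.Walk

/-- a connected signed graph with `i₋(Γ) = ⌈g/2⌉ - 1` that is not a cycle
(i.e. not every vertex has degree 2) has `g ∈ {3, 4}` and `i₋(Γ) = 1`. -/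
theorem girth_of_extremal_negInertia_not_cycle {V : Type*} [Fintype V] [DecidableEq V] (Γ : SignedGraph V)
    (hconn : Γ.G.Connected) (g : ℕ) (hg : Γ.G.egirth = g)
    (h : Γ.negInertia = (g + 1) / 2 - 1)
    (hnc : ¬ ∀ v : V, (Γ.G.neighborSet v).ncard = 2) :
    (g = 3 ∨ g = 4) ∧ Γ.negInertia = 1 := by
  obtain ⟨u, c, hc, hmin⟩ := (exists_egirth_eq_length (G := Γ.G)).mpr fun hac => by
    simp [← egirth_eq_top, hg] at hac
  have hlen : c.length = g := by exact_mod_cast hmin.symm.trans hg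
  have h3 := hc.three_le_length
  by_cases hout : ∃ x ∉ c.support, ∃ v ∈ c.support, Γ.G.Adj x v
  · obtain ⟨x, hx, v, hv, hxv⟩ := hout
    have hmin' : Γ.G.egirth = (c.rotate v hv).length := by rw [length_rotate, hmin]
    by_cases htwo : ∃ n, 0 < n ∧ n < (c.rotate v hv).length ∧
        Γ.G.Adj x ((c.rotate v hv).getVert n)
    · obtain ⟨n, hn0, hn, hxn⟩ := htwo
      have := (hc.rotate hv).length_le_four_of_adj_getVert hmin'
        (by rwa [mem_support_rotate_iff]) hxv hn0 hn hxn
      rw [length_rotate] at this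
      omega
    · push Not at htwo
      have := Γ.le_negInertia_of_isCycle_of_pendant (hc.rotate hv) hmin' hxv htwo
      rw [length_rotate] at this
      omega
  · push Not at hout
    have hall := hconn.preconnected.mem_of_forall_adj_mem (S := {w | w ∈ c.support})
      c.start_mem_support fun v hv w hvw => by_contra fun hw => hout w hw v hv hvw.symm
    refine absurd (fun v => ?_) hnc
    exact (hc.rotate (hall v)).ncard_neighborSet_eq_two (by rw [length_rotate, hmin])
      fun w => (mem_support_rotate_iff _ _ _).mpr (hall w)
end
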